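/- Let A be an n×n irreducible Stieltjes matrix with smallest eigenvalue μ. Suppose each f_i maps [0,∞) into [0,∞), is continuously differentiable on [0,∞), satisfies f_i(t)/t → 0 as t → 0⁺ and f_i(t)/t → ∞ as t → ∞, and satisfies f_i(s)/s < f_i(t)/t whenever 0 < s < t. If μ < λ₁ < λ₂ and x¹, x² are vectors with all components positive such that A x¹ + F(x¹) = λ₁ x¹ and A x² + F(x²) = λ₂ x², then x¹_i < x²_i for every i. -/

import Mathlib

/-!
Let `c = max_i x₁ i / x₂ i`, attained at `k`, so that `x₁ ≤ c • x₂` with equality at `k`.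
Since the off-diagonal entries of `A` are nonpositive, row `k` gives
`c (A x₂)_k ≤ (A x₁)_k`. If `c ≥ 1`, monotonicity of `f_k(t)/t` gives `c f_k(x₂ k) ≤ f_k(x₁ k)`,
and the two equations at row `k` then force `(λ₂ - λ₁) x₁ k ≤ 0`, a contradiction. Hence `c < 1`.
-/

open Matrix

theorem Matrix.mulVec_apply_nonpos_of_nonneg_of_apply_eq_zero {ι : Type*} [Fintype ι]
    {A : Matrix ι ι ℝ} {v : ι → ℝ} {k : ι} (hA : ∀ j, j ≠ k → A k j ≤ 0)
    (hv : ∀ j, 0 ≤ v j) (hvk : v k = 0) : (A *ᵥ v) k ≤ 0 := by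
  refine Finset.sum_nonpos fun j _ => ?_
  rcases eq_or_ne j k with rfl | hjk
  · simp [hvk]
  · exact mul_nonpos_of_nonpos_of_nonneg (hA j hjk) (hv j)

theorem mul_le_of_div_strictMono {g : ℝ → ℝ} (hg : ∀ s t, 0 < s → s < t → g s / s < g t / t)
    {s c : ℝ} (hs : 0 < s) (hc : 1 ≤ c) : c * g s ≤ g (c * s) := by
  rcases hc.eq_or_lt with rfl | hc
  · simp
  · have hcs : 0 < c * s := by positivity
    have h := hg s (c * s) hs (by nlinarith)
    rw [div_lt_div_iff₀ hs hcs] at h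
    nlinarith

theorem exists_eq_mul_and_le_mul_of_pos {ι : Type*} [Fintype ι] [Nonempty ι] (x : ι → ℝ)
    {y : ι → ℝ} (hy : ∀ i, 0 < y i) : ∃ k c, x k = c * y k ∧ ∀ i, x i ≤ c * y i := by
  obtain ⟨k, -, hk⟩ := Finset.exists_max_image Finset.univ (fun i => x i / y i)
    Finset.univ_nonempty
  refine ⟨k, x k / y k, (div_mul_cancel₀ _ (hy k).ne').symm, fun i => ?_⟩
  rw [← div_le_iff₀ (hy i)]
  exact hk i (Finset.mem_univ i)

theorem stmt_3 (n : ℕ) (A : Matrix (Fin n) (Fin n) ℝ)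
    (hA_offdiag : ∀ i j : Fin n, i ≠ j → A i j ≤ 0)
    (f : Fin n → ℝ → ℝ)
    (hf_mono : ∀ (i : Fin n) (s t : ℝ), 0 < s → s < t → f i s / s < f i t / t)
    (lam₁ lam₂ : ℝ) (hlam₁₂ : lam₁ < lam₂)
    (x₁ x₂ : Fin n → ℝ) (hx₁pos : ∀ i, 0 < x₁ i) (hx₂pos : ∀ i, 0 < x₂ i)
    (hx₁ : A.mulVec x₁ + (fun i => f i (x₁ i)) = lam₁ • x₁)
    (hx₂ : A.mulVec x₂ + (fun i => f i (x₂ i)) = lam₂ • x₂) :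
    ∀ i, x₁ i < x₂ i := by
  intro i
  have : Nonempty (Fin n) := ⟨i⟩
  obtain ⟨k, c, hxk, hle⟩ := exists_eq_mul_and_le_mul_of_pos x₁ hx₂pos
  have hc : c < 1 := by
    by_contra! hc
    have hrow : (A *ᵥ (c • x₂ - x₁)) k ≤ 0 :=
      mulVec_apply_nonpos_of_nonneg_of_apply_eq_zero (fun j hj => hA_offdiag k j hj.symm)
        (fun j => by simpa using hle j) (by simp [hxk])
    have hf : c * f k (x₂ k) ≤ f k (x₁ k) :=
      hxk ▸ mul_le_of_div_strictMono (hf_mono k) (hx₂pos k) hc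
    have e₁ := congrFun hx₁ k
    have e₂ := congrFun hx₂ k
    simp only [mulVec_sub, mulVec_smul, Pi.sub_apply, Pi.smul_apply, Pi.add_apply,
      smul_eq_mul] at hrow e₁ e₂
    have hrow_eq : c * (A *ᵥ x₂) k - (A *ᵥ x₁) k
        = (lam₂ - lam₁) * x₁ k + (f k (x₁ k) - c * f k (x₂ k)) := by
      linear_combination c * e₂ - e₁ - lam₂ * hxk
    linarith [mul_pos (sub_pos.2 hlam₁₂) (hx₁pos k)]
  nlinarith [hle i, hx₂pos i]
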